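/- arXiv:1602.01410 — 2 statements merged into one kernel-verified Lean document; each statement's English description precedes it below -/
import Mathlib

section
/- If φ: ℝⁿ → ℝ ∪ {+∞} is a closed proper convex coercive function, D ∈ ℝ^{l×n} is any matrix, and f: ℝⁿ × ℝᵈ → ℝ is a convex quadratic function that is bounded below, then the function (x,z) ↦ f(x,z) + φ(D x) attains its minimum, i.e., the set of minimizers is nonempty. -/
/-
Write the objective as `F y = Q y + ℓ y + c + φ (L y)` with `Q` a quadratic form, `ℓ` linear and
`L (x, z) = D x`. Boundedness below of `Q + ℓ + c` forces `Q ≥ 0`, and on the null directions of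
`Q` it kills both `ℓ` and the polar form of `Q`. Hence `F` is invariant under translation by the
lineality space `N = ker L ∩ ker ℓ ∩ ker (polar Q)`, which contains every `u` with `L u = 0` and
`Q u = 0`; so on a complement `K` of `N` the form `Q y + ‖L y‖²` is positive definite, hence at
least `κ ‖y‖²`. As `φ` is bounded below and has bounded sublevel sets, the sublevel sets of `F`
on `K` are bounded; the lower semicontinuous `F` then attains its minimum on the closed subspace
`K`, and that minimum is global.
-/

open Matrix Filter

/-- Convexity for extended-real-valued functions. -/
def ERealConvex {E : Type*} [AddCommGroup E] [Module ℝ E] (φ : E → EReal) : Prop :=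
  ∀ x y : E, ∀ a b : ℝ, 0 ≤ a → 0 ≤ b → a + b = 1 →
    φ (a • x + b • y) ≤ (a : EReal) * φ x + (b : EReal) * φ y

open Topology Set

lemma eq_zero_of_forall_le_mul_add {b c m : ℝ} (h : ∀ t, m ≤ b * t + c) : b = 0 := by
  by_contra hb
  have := h ((m - c - 1) / b)
  rw [mul_div_cancel₀ _ hb] at this
  linarith

lemma nonneg_of_forall_le_mul_sq_add {a b c m : ℝ} (h : ∀ t, m ≤ a * t ^ 2 + b * t + c) :
    0 ≤ a := by
  have hdisc := discrim_le_zero (a := a) (b := b) (c := c - m) fun t => by linarith [h t]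
  unfold discrim at hdisc
  nlinarith [h 0, h 1, h (-1)]

lemma le_of_mul_sq_le_add_mul {a b c t : ℝ} (hc : 0 < c) (h : c * t ^ 2 ≤ a + b * t) :
    t ≤ (|a| + |b|) / c + 1 := by
  have hab : 0 ≤ (|a| + |b|) / c := by positivity
  rcases le_or_gt t 1 with ht | ht
  · linarith
  · have : c * t ≤ |a| + |b| := by
      nlinarith [le_abs_self a, le_abs_self b, abs_nonneg a, abs_nonneg b]
    have : t ≤ (|a| + |b|) / c := by rw [le_div_iff₀ hc]; linarith
    linarith

lemma EReal.le_coe_sub_of_coe_add_le {a r : ℝ} {x : EReal} (h : (a : EReal) + x ≤ r) :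
    x ≤ ((r - a : ℝ) : EReal) := by
  induction x using EReal.rec with
  | bot => exact bot_le
  | coe x => norm_cast at h ⊢; linarith
  | top => simp at h

theorem LowerSemicontinuousOn.exists_isMinOn' {α β : Type*} [TopologicalSpace α]
    [LinearOrder β] {s : Set α} {f : α → β}
    (hf : LowerSemicontinuousOn f s) (hsc : IsClosed s) {x₀ : α} (h₀ : x₀ ∈ s)
    (hc : ∀ᶠ x in cocompact α ⊓ 𝓟 s, f x₀ ≤ f x) : ∃ x ∈ s, IsMinOn f s x := by
  rcases (hasBasis_cocompact.inf_principal _).eventually_iff.1 hc with ⟨K, hK, hKf⟩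
  have hsub : insert x₀ (K ∩ s) ⊆ s := insert_subset_iff.2 ⟨h₀, inter_subset_right⟩
  obtain ⟨x, hx, hxf⟩ := (hf.mono hsub).exists_isMinOn (insert_nonempty _ _)
    ((hK.inter_right hsc).insert x₀)
  refine ⟨x, hsub hx, fun y hy => ?_⟩
  by_cases hyK : y ∈ K
  exacts [hxf (Or.inr ⟨hyK, hy⟩), (hxf (Or.inl rfl)).trans (hKf ⟨hyK, hy⟩)]

theorem LowerSemicontinuous.exists_forall_le_of_tendsto_cocompact {α : Type*}
    [TopologicalSpace α] [Nonempty α] {f : α → EReal} (hf : LowerSemicontinuous f)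
    (hcoe : Tendsto f (cocompact α) atTop) : ∃ x, ∀ y, f x ≤ f y := by
  obtain ⟨x₀⟩ := ‹Nonempty α›
  obtain ⟨x, -, hx⟩ := (hf.lowerSemicontinuousOn univ).exists_isMinOn' isClosed_univ
    (mem_univ x₀) (by simpa using hcoe.eventually_ge_atTop (f x₀))
  exact ⟨x, fun y => hx (mem_univ y)⟩

lemma LowerSemicontinuous.exists_coe_le_of_tendsto_cocompact {α : Type*} [TopologicalSpace α]
    [Nonempty α] {f : α → EReal} (hf : LowerSemicontinuous f) (hbot : ∀ x, f x ≠ ⊥)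
    (hcoe : Tendsto f (cocompact α) atTop) : ∃ m : ℝ, ∀ x, (m : EReal) ≤ f x := by
  obtain ⟨x, hx⟩ := hf.exists_forall_le_of_tendsto_cocompact hcoe
  obtain ⟨m, -, hm⟩ := EReal.lt_iff_exists_real_btwn.1 (bot_lt_iff_ne_bot.2 (hbot x))
  exact ⟨m, fun y => hm.le.trans (hx y)⟩

lemma exists_norm_le_of_tendsto_cocompact {V : Type*} [NormedAddCommGroup V] {f : V → EReal}
    (hf : Tendsto f (cocompact V) atTop) (r : ℝ) : ∃ R, ∀ v, f v ≤ r → ‖v‖ ≤ R := by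
  obtain ⟨K, hK, hKf⟩ := mem_cocompact.1 (hf.eventually_ge_atTop ((r + 1 : ℝ) : EReal))
  obtain ⟨R, hR⟩ := hK.isBounded.exists_norm_le
  refine ⟨R, fun v hv => hR v ?_⟩
  by_contra hvK
  have : ((r + 1 : ℝ) : EReal) ≤ r := (hKf hvK).trans hv
  norm_cast at this
  linarith

theorem QuadraticMap.continuous_of_finiteDimensional {E : Type*} [NormedAddCommGroup E]
    [NormedSpace ℝ E] [FiniteDimensional ℝ E] (Q : QuadraticForm ℝ E) : Continuous Q := by
  let T : E →ₗ[ℝ] E →L[ℝ] ℝ := LinearMap.toContinuousLinearMap.toLinearMap ∘ₗ polarBilin Q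
  have hT : Continuous fun x => T x x := T.continuous_of_finiteDimensional.clm_apply continuous_id
  have hQ : ⇑Q = fun x => (1 / 2 : ℝ) * T x x := by
    ext x
    simp [T, polar_self]
  rw [hQ]
  exact continuous_const.mul hT

lemma exists_pos_mul_sq_norm_le {E : Type*} [NormedAddCommGroup E] [NormedSpace ℝ E]
    [FiniteDimensional ℝ E] (K : Submodule ℝ E) {P : E → ℝ} (hP : Continuous P)
    (hsmul : ∀ (t : ℝ) y, P (t • y) = t ^ 2 * P y) (hpos : ∀ y ∈ K, y ≠ 0 → 0 < P y) :
    ∃ c > 0, ∀ y ∈ K, c * ‖y‖ ^ 2 ≤ P y := by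
  obtain ⟨c, hc, hcP⟩ : ∃ c > 0, ∀ u ∈ Metric.sphere (0 : E) 1 ∩ K, c ≤ P u := by
    rcases (Metric.sphere (0 : E) 1 ∩ K).eq_empty_or_nonempty with hS | hS
    · exact ⟨1, one_pos, by simp [hS]⟩
    obtain ⟨u, hu, hmin⟩ := ((isCompact_sphere 0 1).inter_right
      K.closed_of_finiteDimensional).exists_isMinOn hS hP.continuousOn
    refine ⟨P u, hpos u hu.2 ?_, fun v hv => hmin hv⟩
    rintro rfl
    simp at hu
  refine ⟨c, hc, fun y hy => ?_⟩
  rcases eq_or_ne y 0 with rfl | hy0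
  · simpa using (hsmul 0 0).ge
  have hny : 0 < ‖y‖ := norm_pos_iff.2 hy0
  have hu : ‖y‖⁻¹ • y ∈ Metric.sphere (0 : E) 1 ∩ K :=
    ⟨by simp [norm_smul, hny.ne'], K.smul_mem _ hy⟩
  have := hcP _ hu
  rw [hsmul, inv_pow] at this
  rw [← div_eq_inv_mul, le_div_iff₀ (by positivity)] at this
  linarith

section Quadratic

variable {E V : Type*} [AddCommGroup E] [Module ℝ E] [AddCommGroup V] [Module ℝ V]
  (Q : QuadraticForm ℝ E) (ℓ : E →ₗ[ℝ] ℝ) (L : E →ₗ[ℝ] V)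

lemma QuadraticMap.nonneg_of_forall_le_add {m c : ℝ} (h : ∀ y, m ≤ Q y + ℓ y + c) (u : E) :
    0 ≤ Q u :=
  nonneg_of_forall_le_mul_sq_add (b := ℓ u) (c := c) (m := m) fun t => by
    have := h (t • u)
    rw [Q.map_smul, map_smul, smul_eq_mul, smul_eq_mul] at this
    linarith

lemma LinearMap.eq_zero_of_forall_le_quadraticMap_add {m c : ℝ} (h : ∀ y, m ≤ Q y + ℓ y + c)
    {u : E} (hu : Q u = 0) : ℓ u = 0 :=
  eq_zero_of_forall_le_mul_add (c := c) (m := m) fun t => by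
    simpa [QuadraticMap.map_smul, hu, mul_comm] using h (t • u)

lemma QuadraticMap.polar_eq_zero_of_nonneg (hQ : ∀ u, 0 ≤ Q u) {u : E} (hu : Q u = 0) (p : E) :
    polar Q p u = 0 :=
  eq_zero_of_forall_le_mul_add (c := Q p) (m := 0) fun t => by
    simpa [QuadraticMap.map_add, QuadraticMap.map_smul, hu, polar_smul_right, mul_comm,
      add_comm] using hQ (p + t • u)

def linealitySpace : Submodule ℝ E :=
  LinearMap.ker L ⊓ LinearMap.ker ℓ ⊓ LinearMap.ker (QuadraticMap.polarBilin Q)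

variable {Q ℓ L}

lemma mem_linealitySpace_of_forall_le {m c : ℝ} (h : ∀ y, m ≤ Q y + ℓ y + c) {u : E}
    (hLu : L u = 0) (hQu : Q u = 0) : u ∈ linealitySpace Q ℓ L := by
  refine ⟨⟨hLu, LinearMap.eq_zero_of_forall_le_quadraticMap_add Q ℓ h hQu⟩, ?_⟩
  ext p
  simpa [QuadraticMap.polar_comm Q u p] using
    Q.polar_eq_zero_of_nonneg (Q.nonneg_of_forall_le_add ℓ h) hQu p

lemma quadraticMap_add_linearMap_add_of_mem_linealitySpace {u : E}
    (hu : u ∈ linealitySpace Q ℓ L) (y : E) : Q (y + u) + ℓ (y + u) = Q y + ℓ y := by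
  obtain ⟨⟨-, hℓu : ℓ u = 0⟩, hpolar⟩ := hu
  have hpu : ∀ p, QuadraticMap.polar Q u p = 0 := fun p => LinearMap.congr_fun hpolar p
  have hQu : Q u = 0 := by simpa [QuadraticMap.polar_self] using hpu u
  rw [QuadraticMap.map_add Q, map_add, hQu, hℓu, QuadraticMap.polar_comm, hpu]
  ring

end Quadratic

section Minimizer

variable {E V : Type*} [NormedAddCommGroup E] [NormedSpace ℝ E] [FiniteDimensional ℝ E]
  [NormedAddCommGroup V] [NormedSpace ℝ V]
  {Q : QuadraticForm ℝ E} {ℓ : E →ₗ[ℝ] ℝ} {L : E →ₗ[ℝ] V} {c m : ℝ} {φ : V → EReal}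

lemma exists_norm_le_of_quadraticMap_add_comp_le (hm : ∀ y, m ≤ Q y + ℓ y + c) {mφ : ℝ}
    (hmφ : ∀ v, (mφ : EReal) ≤ φ v) (hφ : Tendsto φ (cocompact V) atTop)
    {K : Submodule ℝ E} (hK : Disjoint (linealitySpace Q ℓ L) K) (r : ℝ) :
    ∃ R, ∀ y ∈ K, ((Q y + ℓ y + c : ℝ) : EReal) + φ (L y) ≤ r → ‖y‖ ≤ R := by
  have hQ := Q.nonneg_of_forall_le_add ℓ hm
  obtain ⟨κ, hκ, hκK⟩ := exists_pos_mul_sq_norm_le K (P := fun y => Q y + ‖L y‖ ^ 2)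
    ((Q.continuous_of_finiteDimensional).add
      (L.continuous_of_finiteDimensional.norm.pow 2))
    (fun t y => by
      rw [Q.map_smul, map_smul, norm_smul, smul_eq_mul, Real.norm_eq_abs, mul_pow, sq_abs]
      ring)
    (fun y hyK hy0 => by
      by_contra! hP
      have hQy : Q y = 0 := by linarith [hQ y, sq_nonneg ‖L y‖]
      have hLy : L y = 0 := by
        rw [← norm_eq_zero]; nlinarith [hQ y, norm_nonneg (L y)]
      exact hy0 (hK.le_bot ⟨mem_linealitySpace_of_forall_le hm hLy hQy, hyK⟩))
  obtain ⟨R₁, hR₁⟩ := exists_norm_le_of_tendsto_cocompact hφ (r - m)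
  let ℓc := LinearMap.toContinuousLinearMap ℓ
  refine ⟨(|r - mφ - c + R₁ ^ 2| + |‖ℓc‖|) / κ + 1, fun y hyK hy => ?_⟩
  have hφy := EReal.le_coe_sub_of_coe_add_le hy
  have hLy : ‖L y‖ ≤ R₁ := hR₁ _ (hφy.trans (by norm_cast; linarith [hm y]))
  have hqy : Q y + ℓ y + c ≤ r - mφ := by
    have := (hmφ _).trans hφy
    norm_cast at this
    linarith
  have hℓy : -ℓ y ≤ ‖ℓc‖ * ‖y‖ := (neg_le_abs _).trans (ℓc.le_opNorm y)
  refine le_of_mul_sq_le_add_mul hκ ?_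
  calc κ * ‖y‖ ^ 2 ≤ Q y + ‖L y‖ ^ 2 := hκK y hyK
    _ ≤ r - mφ - c + R₁ ^ 2 + ‖ℓc‖ * ‖y‖ := by
      nlinarith [pow_le_pow_left₀ (norm_nonneg (L y)) hLy 2]

theorem exists_forall_quadraticMap_add_comp_le
    (hbdd : BddBelow (range fun y => Q y + ℓ y + c)) (hφ_lsc : LowerSemicontinuous φ)
    (hφ_bot : ∀ v, φ v ≠ ⊥) (hφ : Tendsto φ (cocompact V) atTop) :
    ∃ y, ∀ y', ((Q y + ℓ y + c : ℝ) : EReal) + φ (L y)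
      ≤ ((Q y' + ℓ y' + c : ℝ) : EReal) + φ (L y') := by
  set F : E → EReal := fun y => ((Q y + ℓ y + c : ℝ) : EReal) + φ (L y) with hF
  obtain ⟨m, hm⟩ := hbdd
  replace hm : ∀ y, m ≤ Q y + ℓ y + c := fun y => hm ⟨y, rfl⟩
  obtain ⟨mφ, hmφ⟩ := hφ_lsc.exists_coe_le_of_tendsto_cocompact hφ_bot hφ
  obtain ⟨K, hNK⟩ := (linealitySpace Q ℓ L).exists_isCompl
  have hproj : ∀ y, ∃ p ∈ K, F y = F p := by
    intro y
    obtain ⟨u, hu, p, hp, rfl⟩ :=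
      Submodule.mem_sup.1 (hNK.sup_eq_top ▸ Submodule.mem_top (x := y))
    refine ⟨p, hp, ?_⟩
    have hLu : L u = 0 := hu.1.1
    simp only [hF, add_comm u p, ← quadraticMap_add_linearMap_add_of_mem_linealitySpace hu p,
      map_add, hLu, add_zero]
  by_cases htop : ∀ y, F y = ⊤
  · exact ⟨0, fun y' => (htop 0).trans (htop y').symm |>.le⟩
  obtain ⟨y₁, hy₁⟩ := not_forall.1 htop
  obtain ⟨p₀, hp₀K, hp₀⟩ := hproj y₁
  obtain ⟨R, hR⟩ := exists_norm_le_of_quadraticMap_add_comp_le hm hmφ hφ hNK.disjoint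
    (F p₀).toReal
  have hF_lsc : LowerSemicontinuous F :=
    (continuous_coe_real_ereal.comp (Q.continuous_of_finiteDimensional.add
      ℓ.continuous_of_finiteDimensional |>.add continuous_const)).lowerSemicontinuous.add'
      (hφ_lsc.comp L.continuous_of_finiteDimensional)
      fun y => EReal.continuousAt_add (Or.inl (EReal.coe_ne_top _)) (Or.inl (EReal.coe_ne_bot _))
  have hcoercive : ∀ᶠ y in cocompact E ⊓ 𝓟 K, F p₀ ≤ F y := by
    filter_upwards [(tendsto_norm_cocompact_atTop.eventually_gt_atTop R).filter_mono inf_le_left,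
      mem_inf_of_right (mem_principal_self (K : Set E))] with y hyR hyK
    by_contra! hlt
    exact (hR y hyK (hlt.le.trans (EReal.le_coe_toReal (hp₀ ▸ hy₁)))).not_gt hyR
  obtain ⟨p, -, hp⟩ := (hF_lsc.lowerSemicontinuousOn K).exists_isMinOn'
    K.closed_of_finiteDimensional hp₀K hcoercive
  refine ⟨p, fun y => ?_⟩
  obtain ⟨p', hp'K, hFy⟩ := hproj y
  change F p ≤ F y
  exact hFy ▸ hp hp'K

end Minimizer

section BlockMatrices

variable {ι κ : Type*} [Fintype ι] [Fintype κ]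

noncomputable def blockQuadraticForm (A : Matrix ι ι ℝ) (B : Matrix ι κ ℝ) (C : Matrix κ κ ℝ) :
    QuadraticForm ℝ ((ι → ℝ) × (κ → ℝ)) :=
  LinearMap.BilinMap.toQuadraticMap <| (1 / 2 : ℝ) •
    ((dotProductBilin ℝ ℝ).compl₁₂ (LinearMap.fst ℝ _ _) (A.mulVecLin ∘ₗ LinearMap.fst ℝ _ _)
      + (2 : ℝ) • (dotProductBilin ℝ ℝ).compl₁₂ (LinearMap.fst ℝ _ _)
          (B.mulVecLin ∘ₗ LinearMap.snd ℝ _ _)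
      + (dotProductBilin ℝ ℝ).compl₁₂ (LinearMap.snd ℝ _ _) (C.mulVecLin ∘ₗ LinearMap.snd ℝ _ _))

lemma blockQuadraticForm_apply (A : Matrix ι ι ℝ) (B : Matrix ι κ ℝ) (C : Matrix κ κ ℝ)
    (x : ι → ℝ) (z : κ → ℝ) :
    blockQuadraticForm A B C (x, z) =
      (1 / 2) * (x ⬝ᵥ A *ᵥ x + 2 * (x ⬝ᵥ B *ᵥ z) + z ⬝ᵥ C *ᵥ z) := by
  rw [blockQuadraticForm, LinearMap.BilinMap.toQuadraticMap_apply]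
  simp only [LinearMap.smul_apply, LinearMap.add_apply, LinearMap.compl₁₂_apply,
    LinearMap.comp_apply, LinearMap.fst_apply, LinearMap.snd_apply, Matrix.mulVecLin_apply,
    dotProductBilin_apply_apply, smul_eq_mul]

end BlockMatrices

theorem stmt0_general {n d l : ℕ}
    (φ : (Fin l → ℝ) → EReal)
    (hφ_closed : LowerSemicontinuous φ)
    (hφ_proper : (∀ v, φ v ≠ ⊥) ∧ (∃ v, φ v ≠ ⊤))
    (hφ_coercive : Tendsto φ (cocompact (Fin l → ℝ)) atTop)
    (D : Matrix (Fin l) (Fin n) ℝ)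
    -- f is a quadratic function on ℝⁿ × ℝᵈ, given in block form:
    (A : Matrix (Fin n) (Fin n) ℝ) (B : Matrix (Fin n) (Fin d) ℝ)
    (C : Matrix (Fin d) (Fin d) ℝ) (e : Fin n → ℝ) (f₀ : Fin d → ℝ) (g : ℝ)
    (f : (Fin n → ℝ) → (Fin d → ℝ) → ℝ)
    (hf_def : ∀ x z, f x z =
      (1/2) * (x ⬝ᵥ A.mulVec x + 2 * (x ⬝ᵥ B.mulVec z) + z ⬝ᵥ C.mulVec z)
        + x ⬝ᵥ e + z ⬝ᵥ f₀ + g)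
    (hf_bdd : BddBelow (Set.range (fun p : (Fin n → ℝ) × (Fin d → ℝ) => f p.1 p.2))) :
    ∃ (x : Fin n → ℝ) (z : Fin d → ℝ), ∀ (x' : Fin n → ℝ) (z' : Fin d → ℝ),
      (f x z : EReal) + φ (D.mulVec x) ≤ (f x' z' : EReal) + φ (D.mulVec x') := by
  let ℓ : (Fin n → ℝ) × (Fin d → ℝ) →ₗ[ℝ] ℝ :=
    dotProductBilin ℝ ℝ e ∘ₗ LinearMap.fst ℝ _ _ + dotProductBilin ℝ ℝ f₀ ∘ₗ LinearMap.snd ℝ _ _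
  have hf : ∀ p, f p.1 p.2 = blockQuadraticForm A B C p + ℓ p + g := fun ⟨x, z⟩ => by
    simp [ℓ, hf_def, blockQuadraticForm_apply, dotProduct_comm e, dotProduct_comm f₀, add_assoc]
  obtain ⟨⟨x, z⟩, hmin⟩ :=
    exists_forall_quadraticMap_add_comp_le (L := D.mulVecLin ∘ₗ LinearMap.fst ℝ _ _)
      (by simpa only [hf] using hf_bdd) hφ_closed hφ_proper.1 hφ_coercive
  exact ⟨x, z, fun x' z' => by simpa [← hf] using hmin (x', z')⟩

/-- if φ : ℝˡ → ℝ ∪ {+∞} is closed (lsc) proper convex and coercive,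
D is any l×n matrix, and f : ℝⁿ × ℝᵈ → ℝ is a convex quadratic function bounded
below, then (x,z) ↦ f(x,z) + φ(Dx) attains its minimum. -/
theorem stmt0 {n d l : ℕ}
    (φ : (Fin l → ℝ) → EReal)
    (hφ_closed : LowerSemicontinuous φ)
    (hφ_proper : (∀ v, φ v ≠ ⊥) ∧ (∃ v, φ v ≠ ⊤))
    (hφ_convex : ERealConvex φ)
    (hφ_coercive : Tendsto φ (cocompact (Fin l → ℝ)) atTop)
    (D : Matrix (Fin l) (Fin n) ℝ)
    -- f is a quadratic function on ℝⁿ × ℝᵈ, given in block form: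
    (A : Matrix (Fin n) (Fin n) ℝ) (B : Matrix (Fin n) (Fin d) ℝ)
    (C : Matrix (Fin d) (Fin d) ℝ) (e : Fin n → ℝ) (f₀ : Fin d → ℝ) (g : ℝ)
    (f : (Fin n → ℝ) → (Fin d → ℝ) → ℝ)
    (hf_def : ∀ x z, f x z =
      (1/2) * (x ⬝ᵥ A.mulVec x + 2 * (x ⬝ᵥ B.mulVec z) + z ⬝ᵥ C.mulVec z)
        + x ⬝ᵥ e + z ⬝ᵥ f₀ + g)
    (hf_convex : ConvexOn ℝ Set.univ (fun p : (Fin n → ℝ) × (Fin d → ℝ) => f p.1 p.2))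
    (hf_bdd : BddBelow (Set.range (fun p : (Fin n → ℝ) × (Fin d → ℝ) => f p.1 p.2))) :
    ∃ (x : Fin n → ℝ) (z : Fin d → ℝ), ∀ (x' : Fin n → ℝ) (z' : Fin d → ℝ),
      (f x z : EReal) + φ (D.mulVec x) ≤ (f x' z' : EReal) + φ (D.mulVec x') :=
  stmt0_general φ hφ_closed hφ_proper hφ_coercive D A B C e f₀ g f hf_def hf_bdd
end

section
/- Let G be symmetric positive definite and let w∞₁, w∞₂, and a bounded sequence {wⁱ} satisfy: some subsequence of {wⁱ} converges to w∞₁, some subsequence converges to w∞₂, and both limits a_p = lim_{i→∞} ‖wⁱ − w∞ₚ‖_G exist for p = 1, 2. Then a₁² − a₂² = −‖w∞₁ − w∞₂‖²_G and a₁² − a₂² = ‖w∞₁ − w∞₂‖²_G, hence w∞₁ = w∞₂. -/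
open Matrix Filter Topology

/-! Both `aₚ²` are limits of the continuous quadratic form `q(wⁱ − w∞ₚ)`, `q x = xᵀGx`, so they
can be read off along either convergent subsequence: along the first, `a₁² = 0` and
`a₂² = q(w∞₁ − w∞₂)`; along the second, `a₁² = q(w∞₂ − w∞₁)` and `a₂² = 0`. Since `q` is even,
the two expressions for `a₁² − a₂²` are `∓ q(w∞₁ − w∞₂)`, so `q(w∞₁ − w∞₂) = 0`, and positive
definiteness forces `w∞₁ = w∞₂`. -/

theorem eq_of_tendsto_comp_of_tendsto_subseq {ι α X Y : Type*} [TopologicalSpace X]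
    [TopologicalSpace Y] [T2Space Y] {l : Filter ι} [l.NeBot] {l' : Filter α} {f : X → Y}
    (hf : Continuous f) {w : α → X} {σ : ι → α} (hσ : Tendsto σ l l') {x : X}
    (hw : Tendsto (w ∘ σ) l (𝓝 x)) {a : Y} (ha : Tendsto (fun i => f (w i)) l' (𝓝 a)) :
    a = f x :=
  tendsto_nhds_unique (ha.comp hσ) ((hf.tendsto x).comp hw)

theorem Filter.Tendsto.sq_of_sqrt {ι : Type*} {l : Filter ι} {f : ι → ℝ} {a : ℝ}
    (hf : ∀ i, 0 ≤ f i) (h : Tendsto (fun i => √(f i)) l (𝓝 a)) :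
    Tendsto f l (𝓝 (a ^ 2)) := by
  simpa only [Real.sq_sqrt (hf _)] using h.pow 2

namespace Matrix

variable {m : Type*} [Fintype m]

theorem continuous_dotProduct_mulVec_self (G : Matrix m m ℝ) :
    Continuous fun x : m → ℝ => x ⬝ᵥ G *ᵥ x :=
  continuous_id.dotProduct (continuous_const.matrix_mulVec continuous_id)

theorem sub_dotProduct_mulVec_sub_comm (G : Matrix m m ℝ) (x y : m → ℝ) :
    (x - y) ⬝ᵥ G *ᵥ (x - y) = (y - x) ⬝ᵥ G *ᵥ (y - x) := by
  rw [← neg_sub y x, mulVec_neg, dotProduct_neg, neg_dotProduct, neg_neg]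

theorem PosDef.eq_zero_of_dotProduct_mulVec_self_eq_zero {G : Matrix m m ℝ} (hG : G.PosDef)
    {x : m → ℝ} (hx : x ⬝ᵥ G *ᵥ x = 0) : x = 0 := by
  by_contra hne
  simpa [hx] using hG.dotProduct_mulVec_pos hne

end Matrix

theorem stmt8_general {n : ℕ} (G : Matrix (Fin n) (Fin n) ℝ) (hG : G.PosDef)
    (w : ℕ → (Fin n → ℝ)) (winf1 winf2 : Fin n → ℝ) (a1 a2 : ℝ)
    (σ1 σ2 : ℕ → ℕ) (hσ1 : StrictMono σ1) (hσ2 : StrictMono σ2)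
    (hconv1 : Tendsto (w ∘ σ1) atTop (nhds winf1))
    (hconv2 : Tendsto (w ∘ σ2) atTop (nhds winf2))
    (ha1 : Tendsto (fun i => Real.sqrt ((w i - winf1) ⬝ᵥ G.mulVec (w i - winf1)))
      atTop (nhds a1))
    (ha2 : Tendsto (fun i => Real.sqrt ((w i - winf2) ⬝ᵥ G.mulVec (w i - winf2)))
      atTop (nhds a2)) :
    a1 ^ 2 - a2 ^ 2 = -((winf1 - winf2) ⬝ᵥ G.mulVec (winf1 - winf2)) ∧
    a1 ^ 2 - a2 ^ 2 = (winf1 - winf2) ⬝ᵥ G.mulVec (winf1 - winf2) ∧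
    winf1 = winf2 := by
  have hq_nonneg (x : Fin n → ℝ) : 0 ≤ x ⬝ᵥ G *ᵥ x := by
    simpa using hG.posSemidef.dotProduct_mulVec_nonneg x
  have hq_cont (c : Fin n → ℝ) : Continuous fun v => (v - c) ⬝ᵥ G *ᵥ (v - c) :=
    G.continuous_dotProduct_mulVec_self.comp (continuous_id.sub continuous_const)
  have hsq1 := ha1.sq_of_sqrt fun _ => hq_nonneg _
  have hsq2 := ha2.sq_of_sqrt fun _ => hq_nonneg _
  have e11 := eq_of_tendsto_comp_of_tendsto_subseq (hq_cont _) hσ1.tendsto_atTop hconv1 hsq1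
  have e12 := eq_of_tendsto_comp_of_tendsto_subseq (hq_cont _) hσ1.tendsto_atTop hconv1 hsq2
  have e21 := eq_of_tendsto_comp_of_tendsto_subseq (hq_cont _) hσ2.tendsto_atTop hconv2 hsq1
  have e22 := eq_of_tendsto_comp_of_tendsto_subseq (hq_cont _) hσ2.tendsto_atTop hconv2 hsq2
  have hneg : a1 ^ 2 - a2 ^ 2 = -((winf1 - winf2) ⬝ᵥ G *ᵥ (winf1 - winf2)) := by
    simp [e11, e12]
  have hpos : a1 ^ 2 - a2 ^ 2 = (winf1 - winf2) ⬝ᵥ G *ᵥ (winf1 - winf2) := by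
    simp [e21, e22, G.sub_dotProduct_mulVec_sub_comm winf1 winf2]
  exact ⟨hneg, hpos, sub_eq_zero.1 (hG.eq_zero_of_dotProduct_mulVec_self_eq_zero (by linarith))⟩

/-- key computation in Lemma 5: let G be symmetric PD, {wⁱ} bounded,
with subsequences converging to w∞₁ and w∞₂, and suppose both limits
a_p = lim ‖wⁱ − w∞ₚ‖_G exist (p = 1,2). Then a₁² − a₂² = −‖w∞₁ − w∞₂‖²_G and
a₁² − a₂² = ‖w∞₁ − w∞₂‖²_G, hence w∞₁ = w∞₂. -/
theorem stmt8 {n : ℕ} (G : Matrix (Fin n) (Fin n) ℝ) (hG : G.PosDef)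
    (w : ℕ → (Fin n → ℝ)) (winf1 winf2 : Fin n → ℝ) (a1 a2 : ℝ)
    (hbdd : Bornology.IsBounded (Set.range w))
    (σ1 σ2 : ℕ → ℕ) (hσ1 : StrictMono σ1) (hσ2 : StrictMono σ2)
    (hconv1 : Tendsto (w ∘ σ1) atTop (nhds winf1))
    (hconv2 : Tendsto (w ∘ σ2) atTop (nhds winf2))
    (ha1 : Tendsto (fun i => Real.sqrt ((w i - winf1) ⬝ᵥ G.mulVec (w i - winf1)))
      atTop (nhds a1))
    (ha2 : Tendsto (fun i => Real.sqrt ((w i - winf2) ⬝ᵥ G.mulVec (w i - winf2)))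
      atTop (nhds a2)) :
    a1 ^ 2 - a2 ^ 2 = -((winf1 - winf2) ⬝ᵥ G.mulVec (winf1 - winf2)) ∧
    a1 ^ 2 - a2 ^ 2 = (winf1 - winf2) ⬝ᵥ G.mulVec (winf1 - winf2) ∧
    winf1 = winf2 :=
  stmt8_general G hG w winf1 winf2 a1 a2 σ1 σ2 hσ1 hσ2 hconv1 hconv2 ha1 ha2
end
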